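/- In the N=2 selfish-mining model with γ1 = γ2 = 1/2, θ1 = θ2 = 1/3 and αh = 1 − α1 − α2 > max(α1, α2), if Alice's relative revenue exceeds her Hashrate (R1/(R1+R2+Rh) > α1), then Alice loses during the first difficulty-adjustment period but profits after finitely many periods: with n = R1 + R2 + Rh and a_k = k·R1/(1 + (k−1)·n), one has a_1 < α1, yet there exists K such that a_k > α1 for all k ≥ K. -/
import Mathlib


/-- N=2 selfish-mining model: Alice's valid-block rate. -/
noncomputable def R1N2 (a1 a2 g1 g2 t1 t2 : ℝ) : ℝ :=
  let h := 1 - a1 - a2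
  (2*a1^2*(1+h) + (a2+h)*a1*h*g1 + a1*a2*h + 4*a1^2*a2*(1+h) + 2*a1*a2*h^2*t1)
    / (1 + a1 + a2 + a1*h + 2*a1*a2 + a2*h + 2*a1*a2*h)

/-- N=2 selfish-mining model: Bob's valid-block rate. -/
noncomputable def R2N2 (a1 a2 g1 g2 t1 t2 : ℝ) : ℝ :=
  let h := 1 - a1 - a2
  (2*a2^2*(1+h) + (a1+h)*h*a2*g2 + a1*a2*h + 4*a2^2*a1*(1+h) + 2*a1*a2*h^2*t2)
    / (1 + a1 + a2 + a1*h + 2*a1*a2 + a2*h + 2*a1*a2*h)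

/-- N=2 selfish-mining model: Henry's valid-block rate. -/
noncomputable def RhN2 (a1 a2 g1 g2 t1 t2 : ℝ) : ℝ :=
  let h := 1 - a1 - a2
  (h + a1*h^2*(2-g1) + a2*h^2*(2-g2) + 2*a1*a2*h^2*(2-t1-t2) + a1*a2*h*(2-g1-g2))
    / (1 + a1 + a2 + a1*h + 2*a1*a2 + a2*h + 2*a1*a2*h)

/-- N=2 model: Alice's relative revenue R_A. -/
noncomputable def RA2 (a1 a2 g1 g2 t1 t2 : ℝ) : ℝ :=
  R1N2 a1 a2 g1 g2 t1 t2 /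
    (R1N2 a1 a2 g1 g2 t1 t2 + R2N2 a1 a2 g1 g2 t1 t2 + RhN2 a1 a2 g1 g2 t1 t2)

/-- N=2 model: Bob's relative revenue R_B. -/
noncomputable def RB2 (a1 a2 g1 g2 t1 t2 : ℝ) : ℝ :=
  R2N2 a1 a2 g1 g2 t1 t2 /
    (R1N2 a1 a2 g1 g2 t1 t2 + R2N2 a1 a2 g1 g2 t1 t2 + RhN2 a1 a2 g1 g2 t1 t2)

/-- Total valid-block rate n = R1+R2+Rh in the N=2 model with γ1=γ2=1/2, θ1=θ2=1/3. -/
noncomputable def nTot (a1 a2 : ℝ) : ℝ :=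
  R1N2 a1 a2 (1/2) (1/2) (1/3) (1/3) + R2N2 a1 a2 (1/2) (1/2) (1/3) (1/3)
    + RhN2 a1 a2 (1/2) (1/2) (1/3) (1/3)

/-- Alice's cumulative absolute revenue after k difficulty-adjustment periods:
a_k = k·R1/(1+(k−1)·n). -/
noncomputable def aCum (a1 a2 : ℝ) (k : ℕ) : ℝ :=
  (k : ℝ) * R1N2 a1 a2 (1/2) (1/2) (1/3) (1/3) / (1 + ((k : ℝ) - 1) * nTot a1 a2)

/-- In the N=2 model with γ1=γ2=1/2, θ1=θ2=1/3 and αh = 1-α1-α2 > max(α1,α2),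
if Alice's relative revenue exceeds her Hashrate then Alice loses during the
first difficulty-adjustment period, yet profits after finitely many periods. -/
theorem lose_first_then_profit (a1 a2 : ℝ)
    (ha1 : 0 < a1) (ha1' : a1 < 1) (ha2 : 0 < a2) (ha2' : a2 < 1)
    (hmax : max a1 a2 < 1 - a1 - a2)
    (hprof : R1N2 a1 a2 (1/2) (1/2) (1/3) (1/3) / nTot a1 a2 > a1) :
    aCum a1 a2 1 < a1 ∧ ∃ K : ℕ, ∀ k : ℕ, K ≤ k → aCum a1 a2 k > a1 := by
  have hha : a1 < 1 - a1 - a2 := lt_of_le_of_lt (le_max_left a1 a2) hmax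
  have hhb : a2 < 1 - a1 - a2 := lt_of_le_of_lt (le_max_right a1 a2) hmax
  have hh : (0:ℝ) < 1 - a1 - a2 := lt_trans ha1 hha
  have hh1 : 1 - a1 - a2 < 1 := by linarith
  have ha1h : a1 < 1/2 := by linarith
  have ha2h : a2 < 1/2 := by linarith
  set h : ℝ := 1 - a1 - a2 with hdef
  clear_value h
  have h1h : (0:ℝ) < 1 + h := by linarith
  have hD : (0:ℝ) < 1 + a1 + a2 + a1*h + 2*a1*a2 + a2*h + 2*a1*a2*h := by
    have := mul_pos ha1 hh
    have := mul_pos ha2 hh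
    have := mul_pos ha1 ha2
    have := mul_pos (mul_pos ha1 ha2) hh
    linarith
  have hR1eq : R1N2 a1 a2 (1/2) (1/2) (1/3) (1/3)
      = (2*a1^2*(1+h) + (a2+h)*a1*h*(1/2) + a1*a2*h + 4*a1^2*a2*(1+h) + 2*a1*a2*h^2*(1/3))
        / (1 + a1 + a2 + a1*h + 2*a1*a2 + a2*h + 2*a1*a2*h) := by
    rw [hdef]; simp only [R1N2]
  have hR2eq : R2N2 a1 a2 (1/2) (1/2) (1/3) (1/3)
      = (2*a2^2*(1+h) + (a1+h)*h*a2*(1/2) + a1*a2*h + 4*a2^2*a1*(1+h) + 2*a1*a2*h^2*(1/3))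
        / (1 + a1 + a2 + a1*h + 2*a1*a2 + a2*h + 2*a1*a2*h) := by
    rw [hdef]; simp only [R2N2]
  have hRheq : RhN2 a1 a2 (1/2) (1/2) (1/3) (1/3)
      = (h + a1*h^2*(2-1/2) + a2*h^2*(2-1/2) + 2*a1*a2*h^2*(2-1/3-1/3) + a1*a2*h*(2-1/2-1/2))
        / (1 + a1 + a2 + a1*h + 2*a1*a2 + a2*h + 2*a1*a2*h) := by
    rw [hdef]; simp only [RhN2]
  have hhsq : (0:ℝ) < h^2 := pow_pos hh 2
  have ha1sq : (0:ℝ) < a1^2 := pow_pos ha1 2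
  have ha2sq : (0:ℝ) < a2^2 := pow_pos ha2 2
  -- positivity of the three rates
  have hR1pos : 0 < R1N2 a1 a2 (1/2) (1/2) (1/3) (1/3) := by
    rw [hR1eq]
    apply div_pos _ hD
    have p1 : (0:ℝ) < 2*a1^2*(1+h) := mul_pos (by positivity) h1h
    have p2 : (0:ℝ) < (a2+h)*a1*h*(1/2) :=
      mul_pos (mul_pos (mul_pos (add_pos ha2 hh) ha1) hh) (by norm_num)
    have p3 : (0:ℝ) < a1*a2*h := mul_pos (mul_pos ha1 ha2) hh
    have p4 : (0:ℝ) < 4*a1^2*a2*(1+h) := mul_pos (mul_pos (by positivity) ha2) h1h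
    have p5 : (0:ℝ) < 2*a1*a2*h^2*(1/3) :=
      mul_pos (mul_pos (mul_pos (by positivity) ha2) hhsq) (by norm_num)
    linarith
  have hR2pos : 0 < R2N2 a1 a2 (1/2) (1/2) (1/3) (1/3) := by
    rw [hR2eq]
    apply div_pos _ hD
    have p1 : (0:ℝ) < 2*a2^2*(1+h) := mul_pos (by positivity) h1h
    have p2 : (0:ℝ) < (a1+h)*h*a2*(1/2) :=
      mul_pos (mul_pos (mul_pos (add_pos ha1 hh) hh) ha2) (by norm_num)
    have p3 : (0:ℝ) < a1*a2*h := mul_pos (mul_pos ha1 ha2) hh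
    have p4 : (0:ℝ) < 4*a2^2*a1*(1+h) := mul_pos (mul_pos (by positivity) ha1) h1h
    have p5 : (0:ℝ) < 2*a1*a2*h^2*(1/3) :=
      mul_pos (mul_pos (mul_pos (by positivity) ha2) hhsq) (by norm_num)
    linarith
  have hRhpos : 0 < RhN2 a1 a2 (1/2) (1/2) (1/3) (1/3) := by
    rw [hRheq]
    apply div_pos _ hD
    have p1 : (0:ℝ) < a1*h^2*(2-1/2:ℝ) := mul_pos (mul_pos ha1 hhsq) (by norm_num)
    have p2 : (0:ℝ) < a2*h^2*(2-1/2:ℝ) := mul_pos (mul_pos ha2 hhsq) (by norm_num)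
    have p3 : (0:ℝ) < 2*a1*a2*h^2*(2-1/3-1/3:ℝ) :=
      mul_pos (mul_pos (mul_pos (by positivity) ha2) hhsq) (by norm_num)
    have p4 : (0:ℝ) < a1*a2*h*(2-1/2-1/2:ℝ) := mul_pos (mul_pos (mul_pos ha1 ha2) hh) (by norm_num)
    linarith
  have hn : 0 < nTot a1 a2 := by
    unfold nTot; exact add_pos (add_pos hR1pos hR2pos) hRhpos
  -- key inequality: R1 < a1
  have hg : -h*(a2+h)/2 + 2*a1*a2*(1+h) + (2/3)*a2*h^2 - 2*a2 < 0 := by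
    have e1 : a1*(1+h) < 1 := by nlinarith
    have t2 : 2*a2*(a1*(1+h)) < 2*a2*1 :=
      mul_lt_mul_of_pos_left e1 (by linarith)
    have t3 : ((2:ℝ)/3*a2)*h^2 < (1/2)*h^2 :=
      mul_lt_mul_of_pos_right (by linarith) hhsq
    have t4 : (0:ℝ) < h*a2 := mul_pos hh ha2
    linarith [t2, t3, t4]
  have hR1lt : R1N2 a1 a2 (1/2) (1/2) (1/3) (1/3) < a1 := by
    rw [hR1eq, div_lt_iff₀ hD]
    have hkey : (2*a1^2*(1+h) + (a2+h)*a1*h*(1/2) + a1*a2*h + 4*a1^2*a2*(1+h) + 2*a1*a2*h^2*(1/3))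
        - a1 * (1 + a1 + a2 + a1*h + 2*a1*a2 + a2*h + 2*a1*a2*h)
        = a1 * (-h*(a2+h)/2 + 2*a1*a2*(1+h) + (2/3)*a2*h^2 - 2*a2) := by
      rw [hdef]; ring
    have hneg := mul_neg_of_pos_of_neg ha1 hg
    linarith
  -- translate hprof
  have hR1n : a1 * nTot a1 a2 < R1N2 a1 a2 (1/2) (1/2) (1/3) (1/3) :=
    (lt_div_iff₀ hn).mp hprof
  constructor
  · have heq1 : aCum a1 a2 1 = R1N2 a1 a2 (1/2) (1/2) (1/3) (1/3) := by
      simp [aCum]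
    rw [heq1]; exact hR1lt
  · set R1 := R1N2 a1 a2 (1/2) (1/2) (1/3) (1/3) with hR1def
    set n := nTot a1 a2 with hndef
    have hacum : ∀ k : ℕ, aCum a1 a2 k = (k:ℝ) * R1 / (1 + ((k:ℝ) - 1) * n) :=
      fun k => rfl
    clear_value R1 n
    have hpos : 0 < R1 - a1 * n := by linarith
    obtain ⟨K, hK⟩ := exists_nat_gt (a1 * (1 - n) / (R1 - a1 * n))
    refine ⟨K + 1, fun k hk => ?_⟩
    have hk1 : 1 ≤ k := le_trans (Nat.le_add_left 1 K) hk
    have hkc : (K:ℝ) + 1 ≤ (k:ℝ) := by exact_mod_cast hk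
    have hkR : a1 * (1 - n) / (R1 - a1 * n) < (k:ℝ) := by linarith
    have hkR' : a1 * (1 - n) < (k:ℝ) * (R1 - a1 * n) := by
      rw [div_lt_iff₀ hpos] at hkR; linarith
    have hk0 : (0:ℝ) ≤ (k:ℝ) - 1 := by
      have : (1:ℝ) ≤ (k:ℝ) := by exact_mod_cast hk1
      linarith
    have hden : 0 < 1 + ((k:ℝ) - 1) * n := by
      have := mul_nonneg hk0 hn.le
      linarith
    rw [hacum k]
    rw [gt_iff_lt, lt_div_iff₀ hden]
    linarith [hkR']
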